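/- Define T₀(5) = −0.1382, T₀(6) = −0.0711, T₀(7) = −0.01362, ρ₂(5) = 0.913, ρ₂(6) = 0.952, ρ₂(7) = 0.99, and a(5) = a(6) = 0.1, a(7) = 3.75/49. For each n ∈ {5, 6, 7}, each t with T₀(n) ≤ t ≤ 0, and each ρ with 3·a(n)/π ≤ ρ ≤ ρ₂(n), one has I(circPerim0(ρπ/3 − 2t), n, t, ρ) > 0, i.e., √(4π·a − a²) − t·B' + (5 − n)·p₅' − ρ·p₅ > 0 where a = ρπ/3 − 2t. -/

import Mathlib

open Real

/-- Perimeter of a regular spherical `n`-gon of area `x` on the unit sphere. -/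
noncomputable def regPerim (x n : ℝ) : ℝ :=
  n * Real.arccos ((Real.cos (2 * π / n) +
      (Real.cos ((π - (2 * π - x) / n) / 2)) ^ 2) /
      (Real.sin ((π - (2 * π - x) / n) / 2)) ^ 2)

/-- Circumference of a circle on the unit sphere enclosing area `a`. -/
noncomputable def circPerim0 (a : ℝ) : ℝ := Real.sqrt (4 * π * a - a ^ 2)

/-- Perimeter of the regular spherical pentagon of area `π/3`. -/
noncomputable def p5 : ℝ := 5 * Real.arccos ((4 * Real.cos (2 * π / 5) + 1) / 3)

/-- Derivative at `n = 5` of `n ↦ regPerim (π/3) n`. -/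
noncomputable def p5' : ℝ := deriv (fun n : ℝ => regPerim (π / 3) n) 5

/-- `B' = -∂₁ regPerim (π/3, 5)`. -/
noncomputable def B' : ℝ := - deriv (fun x : ℝ => regPerim x 5) (π / 3)

/-- The isoperimetric functional `I(ℓ, n, t, ρ)`. -/
noncomputable def Ifun (ℓ n t ρ : ℝ) : ℝ := ℓ - t * B' + (5 - n) * p5' - ρ * p5

/-- The constant `ρ₁` of the proof (values specified only for `n = 5, 6, 7`). -/
noncomputable def rho1 : ℕ → ℝ
  | 5 => 0.913
  | 6 => 0.952
  | 7 => 0.99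
  | _ => 1

/-- The constant `T₁` of the proof (values specified only for `n = 5, 6, 7`). -/
noncomputable def T1 : ℕ → ℝ
  | 5 => 0.117
  | 6 => 0.065
  | 7 => 0.0134
  | _ => 0

/-- The constant `T₀` of the proof (values specified only for `n = 5, 6, 7`). -/
noncomputable def T0 : ℕ → ℝ
  | 5 => -0.1382
  | 6 => -0.0711
  | 7 => -0.01362
  | _ => 0

/-- The constant `ρ₂` of the proof (values specified only for `n = 5, 6, 7`). -/
noncomputable def rho2 : ℕ → ℝ
  | 5 => 0.913
  | 6 => 0.952
  | 7 => 0.99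
  | _ => 1

/-- The upper bound `R(n)`: `0.9957` for `n = 5` and `1` otherwise. -/
noncomputable def Rbd : ℕ → ℝ
  | 5 => 0.9957
  | _ => 1

/-- The area lower bound `a(n) = min (3.75 / n², 0.1)`. -/
noncomputable def aFn (n : ℕ) : ℝ := min (3.75 / (n : ℝ) ^ 2) 0.1


/-!
Since `t ≤ 0`, the area `ρπ/3 - 2t` exceeds `ρπ/3`, and by concavity of `a ↦ √(4πa - a²)` the
circle perimeter gains at least `1.52·|t|` from this, which beats the loss `|t|·|B'|` in the term
`-t·B'`. This reduces the claim to `t = 0`, i.e. to `ρ·p₅ - (5 - n)·p₅' < π·√(4ρ/3 - ρ²/9)`, a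
quadratic inequality in `ρ` once the bounds `p₅ ≤ 3.6489`, `p₅' ≤ -0.0776` and `B' ≥ -1.52` are
known. These come from closed forms: at the regular pentagon of area `π/3` the half-angle in
`regPerim` is `π/3` and the argument of `arccos` is `√5/3`, so `p₅ = 5·arccos(√5/3)`,
`B' = -√3(3 + √5)/6`, and `p₅'` is obtained by the chain rule.
-/

lemma cos_two_pi_div_five : cos (2 * π / 5) = (√5 - 1) / 4 := by
  rw [show 2 * π / 5 = 2 * (π / 5) by ring, cos_two_mul, cos_pi_div_five]
  linear_combination (1 / 8 : ℝ) * sq_sqrt (show (0 : ℝ) ≤ 5 by norm_num)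

lemma sin_pi_div_three_sq : sin (π / 3) ^ 2 = 3 / 4 := by
  rw [sin_pi_div_three, div_pow, sq_sqrt (by norm_num)]; norm_num

lemma pentagon_ratio_eq :
    (cos (2 * π / 5) + cos (π / 3) ^ 2) / sin (π / 3) ^ 2 = √5 / 3 := by
  rw [cos_two_pi_div_five, cos_pi_div_three, sin_pi_div_three_sq]; ring

lemma hasDerivAt_arccos_ratio_at_pentagon {f β : ℝ → ℝ} {f' β' x : ℝ} (hf : HasDerivAt f f' x)
    (hβ : HasDerivAt β β' x) (hfx : f x = cos (2 * π / 5)) (hβx : β x = π / 3) :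
    HasDerivAt (fun y => arccos ((f y + cos (β y) ^ 2) / sin (β y) ^ 2))
      (√3 * (3 + √5) / 3 * β' - 2 * f') x := by
  have h3 : √3 ^ 2 = 3 := sq_sqrt (by norm_num)
  have h5 : √5 ^ 2 = 5 := sq_sqrt (by norm_num)
  have hratio : (f x + cos (β x) ^ 2) / sin (β x) ^ 2 = √5 / 3 := by
    rw [hfx, hβx, pentagon_ratio_eq]
  have hsin : sin (β x) ^ 2 ≠ 0 := by rw [hβx, sin_pi_div_three_sq]; norm_num
  have hne_one : √5 / 3 ≠ 1 := by nlinarith [sqrt_nonneg 5]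
  have hne_neg_one : √5 / 3 ≠ -1 := by linarith [sqrt_nonneg 5]
  have hroot : √(1 - (√5 / 3) ^ 2) = 2 / 3 := by
    rw [sqrt_eq_iff_mul_self_eq_of_pos (by norm_num)]; linear_combination (1 / 9 : ℝ) * h5
  have hg := (hf.fun_add (hβ.cos.fun_pow 2)).fun_div (hβ.sin.fun_pow 2) hsin
  refine ((hasDerivAt_arccos (by rwa [hratio]) (by rwa [hratio])).comp x hg).congr_deriv ?_
  rw [hratio, hroot, hfx, hβx, cos_two_pi_div_five, cos_pi_div_three, sin_pi_div_three]
  norm_num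
  field_simp
  linear_combination (24 * √3 * f' - 12 * √3 ^ 2 * β' - 4 * √5 * (√3 ^ 2 + 3) * β') * h3

lemma hasDerivAt_regPerim_area :
    HasDerivAt (fun x => regPerim x 5) (√3 * (3 + √5) / 6) (π / 3) := by
  have hβ : HasDerivAt (fun x : ℝ => (π - (2 * π - x) / 5) / 2) (1 / 10) (π / 3) :=
    ((((hasDerivAt_id' _).const_sub (2 * π)).div_const 5).const_sub π).div_const 2
      |>.congr_deriv (by norm_num)
  exact ((hasDerivAt_arccos_ratio_at_pentagon (hasDerivAt_const _ (cos (2 * π / 5))) hβ rfl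
    (by ring)).const_mul 5).congr_deriv (by ring)

lemma hasDerivAt_regPerim_sides :
    HasDerivAt (fun n => regPerim (π / 3) n)
      (arccos (√5 / 3) - 4 * π * sin (2 * π / 5) / 5 + √3 * π * (3 + √5) / 18) 5 := by
  have h5 : (5 : ℝ) ≠ 0 := by norm_num
  have hinv (c : ℝ) : HasDerivAt (fun n : ℝ => c / n) (-c / 25) 5 :=
    (hasDerivAt_const (5 : ℝ) c).fun_div (hasDerivAt_id' (5 : ℝ)) h5 |>.congr_deriv (by ring)
  have hf : HasDerivAt (fun n : ℝ => cos (2 * π / n)) (2 * π * sin (2 * π / 5) / 25) 5 :=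
    (hinv (2 * π)).cos.congr_deriv (by ring)
  have hβ : HasDerivAt (fun n : ℝ => (π - (2 * π - π / 3) / n) / 2) (π / 30) 5 :=
    ((hinv (2 * π - π / 3)).const_sub π).div_const 2 |>.congr_deriv (by ring)
  have hβ5 : (π - (2 * π - π / 3) / 5) / 2 = π / 3 := by ring
  refine ((hasDerivAt_id' 5).mul (hasDerivAt_arccos_ratio_at_pentagon hf hβ rfl hβ5)).congr_deriv ?_
  rw [hβ5, pentagon_ratio_eq]
  ring

lemma B'_eq : B' = -(√3 * (3 + √5) / 6) := by
  rw [B', hasDerivAt_regPerim_area.deriv]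

lemma p5_eq : p5 = 5 * arccos (√5 / 3) := by
  rw [p5, cos_two_pi_div_five]; ring_nf

lemma p5'_eq : p5' = arccos (√5 / 3) - 4 * π * sin (2 * π / 5) / 5 + √3 * π * (3 + √5) / 18 := by
  rw [p5', hasDerivAt_regPerim_sides.deriv]

lemma cos_le_of_cos_half_le {θ c d : ℝ} (hθ : |θ| ≤ π) (h : cos (θ / 2) ≤ c)
    (hd : 2 * c ^ 2 - 1 ≤ d) : cos θ ≤ d := by
  have h₀ : 0 ≤ cos (θ / 2) :=
    cos_nonneg_of_mem_Icc ⟨by linarith [neg_abs_le θ], by linarith [le_abs_self θ]⟩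
  rw [show θ = 2 * (θ / 2) by ring, cos_two_mul]
  nlinarith

/-- Five half-angle steps down from `cos (0.72978 / 32)`, where the fourth-order Taylor bound
is sharp enough. -/
lemma cos_072978_le : cos 0.72978 ≤ 0.74532928 := by
  have hπ : |(0.72978 : ℝ)| ≤ π := by rw [abs_of_pos (by norm_num)]; linarith [pi_gt_three]
  have half : ∀ θ : ℝ, |θ| ≤ π → |θ / 2| ≤ π := fun θ hθ => by
    rw [abs_div, abs_two]; linarith [abs_nonneg θ]
  refine cos_le_of_cos_half_le hπ (c := 0.93416521) ?_ (by norm_num)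
  refine cos_le_of_cos_half_le (half _ hπ) (c := 0.98340358) ?_ (by norm_num)
  refine cos_le_of_cos_half_le (half _ (half _ hπ)) (c := 0.99584225) ?_ (by norm_num)
  refine cos_le_of_cos_half_le (half _ (half _ (half _ hπ))) (c := 0.99896002) ?_ (by norm_num)
  refine cos_le_of_cos_half_le (half _ (half _ (half _ (half _ hπ)))) (c := 0.99973997) ?_
    (by norm_num)
  have := (abs_le.1 (cos_bound (x := 0.72978 / 2 / 2 / 2 / 2 / 2) (by norm_num [abs_of_pos]))).2
  norm_num [abs_of_pos] at this ⊢
  linarith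

lemma arccos_sqrt_five_div_three_le : arccos (√5 / 3) ≤ 0.72978 := by
  have h5 : (2.23599 : ℝ) ≤ √5 := le_sqrt_of_sq_le (by norm_num)
  calc arccos (√5 / 3) ≤ arccos (cos 0.72978) :=
        arccos_le_arccos (cos_072978_le.trans (by linarith))
    _ = 0.72978 := arccos_cos (by norm_num) (by linarith [pi_gt_three])

lemma p5_le : p5 ≤ 3.6489 := by
  rw [p5_eq]; linarith [arccos_sqrt_five_div_three_le]

lemma sqrt_three_mul_three_add_sqrt_five_le : √3 * (3 + √5) ≤ 9.06915 := by
  have h3 : √3 ≤ 1.7320509 := (sqrt_le_left (by norm_num)).2 (by norm_num)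
  have h5 : √5 ≤ 2.236068 := (sqrt_le_left (by norm_num)).2 (by norm_num)
  nlinarith [sqrt_nonneg 3, sqrt_nonneg 5]

lemma le_B' : -1.52 ≤ B' := by
  rw [B'_eq]; linarith [sqrt_three_mul_three_add_sqrt_five_le]

lemma le_sin_two_pi_div_five : 0.9510565 ≤ sin (2 * π / 5) := by
  have hpos : 0 < sin (2 * π / 5) := sin_pos_of_pos_of_lt_pi (by positivity) (by linarith [pi_pos])
  have h5 : (2.2360679 : ℝ) ≤ √5 := le_sqrt_of_sq_le (by norm_num)
  have hsq := sin_sq_add_cos_sq (2 * π / 5)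
  rw [cos_two_pi_div_five] at hsq
  nlinarith [sq_sqrt (show (0 : ℝ) ≤ 5 by norm_num)]

lemma p5'_le : p5' ≤ -0.0776 := by
  have hπ₀ := pi_gt_d6
  have hπ₁ := pi_lt_d6
  have hsin := le_sin_two_pi_div_five
  have hK := sqrt_three_mul_three_add_sqrt_five_le
  rw [p5'_eq]
  linarith [arccos_sqrt_five_div_three_le, mul_le_mul hπ₀.le hsin (by norm_num) pi_pos.le,
    mul_le_mul hK hπ₁.le (by positivity) (by norm_num)]

lemma circPerim0_le (a : ℝ) : circPerim0 a ≤ 2 * π :=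
  (sqrt_le_left (by positivity)).2 (by nlinarith [sq_nonneg (a - 2 * π)])

/-- Concavity of `circPerim0` as a chord estimate: `u - v = (u² - v²) / (u + v)` with
`u + v ≤ 4π`. -/
lemma circPerim0_add_le {a b : ℝ} (ha : 0 ≤ a) (hab : a ≤ b) (hb : a + b ≤ 4 * π) :
    circPerim0 a + (b - a) * (4 * π - a - b) / (4 * π) ≤ circPerim0 b := by
  have hv : circPerim0 a ^ 2 = 4 * π * a - a ^ 2 := sq_sqrt (by nlinarith)
  have hu : circPerim0 b ^ 2 = 4 * π * b - b ^ 2 := sq_sqrt (by nlinarith)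
  have hvu : circPerim0 a ≤ circPerim0 b := sqrt_le_sqrt (by nlinarith)
  have hsum : circPerim0 a + circPerim0 b ≤ 4 * π := by
    linarith [circPerim0_le a, circPerim0_le b]
  rw [← le_sub_iff_add_le', div_le_iff₀ (by positivity)]
  nlinarith [mul_le_mul_of_nonneg_left hsum (sub_nonneg.2 hvu)]

lemma mul_p5_sub_lt_circPerim0 {ρ C : ℝ} (hρ : 0 ≤ ρ)
    (hquad : (3.6489 * ρ - C) ^ 2 < 3.141592 ^ 2 * (4 * ρ / 3 - ρ ^ 2 / 9)) :
    ρ * p5 - C < circPerim0 (ρ * π / 3) := by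
  have hπ := pi_gt_d6
  have hpos : 0 < 4 * ρ / 3 - ρ ^ 2 / 9 := by nlinarith [sq_nonneg (3.6489 * ρ - C)]
  calc ρ * p5 - C ≤ 3.6489 * ρ - C := by nlinarith [p5_le]
    _ < circPerim0 (ρ * π / 3) := by
      refine lt_sqrt_of_sq_lt (hquad.trans_le ?_)
      have hπsq : 3.141592 ^ 2 ≤ π ^ 2 := pow_le_pow_left₀ (by norm_num) hπ.le 2
      nlinarith [mul_le_mul_of_nonneg_right hπsq hpos.le]

lemma Ifun_pos_of_sq_lt {n t ρ C : ℝ} (ht₀ : -1 / 4 ≤ t) (ht₁ : t ≤ 0) (hρ₀ : 0 ≤ ρ)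
    (hρ₁ : ρ ≤ 1) (hC : C ≤ (5 - n) * p5')
    (hquad : (3.6489 * ρ - C) ^ 2 < 3.141592 ^ 2 * (4 * ρ / 3 - ρ ^ 2 / 9)) :
    Ifun (circPerim0 (ρ * π / 3 - 2 * t)) n t ρ > 0 := by
  have hπ := pi_gt_three
  have hgrowth := circPerim0_add_le (a := ρ * π / 3) (b := ρ * π / 3 - 2 * t) (by positivity)
    (by linarith) (by nlinarith)
  have hchord : -1.52 * t ≤
      (ρ * π / 3 - 2 * t - ρ * π / 3) * (4 * π - ρ * π / 3 - (ρ * π / 3 - 2 * t)) / (4 * π) := by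
    have hbracket : 0 ≤ 1.92 * π - 4 * ρ * π / 3 + 4 * t := by nlinarith
    rw [le_div_iff₀ (by positivity)]
    nlinarith [mul_nonneg (neg_nonneg.2 ht₁) hbracket]
  have hB : t * B' ≤ -1.52 * t := by nlinarith [le_B']
  have hbase := mul_p5_sub_lt_circPerim0 hρ₀ hquad
  unfold Ifun
  linarith

theorem case_T_neg_rho_small :
    ∀ n ∈ ({5, 6, 7} : Set ℕ), ∀ t ∈ Set.Icc (T0 n) 0,
      ∀ ρ ∈ Set.Icc (3 * aFn n / π) (rho2 n),
        Ifun (circPerim0 (ρ * π / 3 - 2 * t)) (n : ℝ) t ρ > 0 := by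
  intro n hn t ⟨ht₀, ht₁⟩ ρ ⟨hρ₀, hρ₁⟩
  have haFn : 0 ≤ aFn n := le_min (by positivity) (by norm_num)
  replace hρ₀ : 3 * aFn n / 3.15 ≤ ρ :=
    (div_le_div_of_nonneg_left (by positivity) pi_pos pi_lt_d2.le).trans hρ₀
  have hn₅ : (5 : ℝ) ≤ n := by rcases hn with rfl | rfl | rfl <;> norm_num
  refine Ifun_pos_of_sq_lt (C := (n - 5) * 0.0776) ?_ ht₁ ?_ ?_ (by nlinarith [p5'_le]) ?_ <;>
    rcases hn with rfl | rfl | rfl <;> norm_num [T0, rho2, aFn] at ht₀ hρ₀ hρ₁ ⊢ <;>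
    nlinarith [mul_nonneg (sub_nonneg.2 hρ₀) (sub_nonneg.2 hρ₁)]
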